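/- arXiv:2408.12367 — 2 statements merged into one kernel-verified Lean document; each statement's English description precedes it below -/
import Mathlib

section
/- If P is a closed path polyomino (a sequence of cells A_1,...,A_n, A_{n+1}=A_1 with n>5, consecutive cells sharing an edge, all A_1,...,A_n distinct, and V(A_i)∩V(A_j)=∅ whenever j∉{i−2,i−1,i,i+1,i+2} modulo n), then the number of vertices of P equals twice the number of cells of P, i.e., |V(P)| = 2|P|. -/
/-- The set of the four lattice-point vertices of the unit cell with lower-left corner `c`. -/
def cellVerts (c : ℤ × ℤ) : Finset (ℤ × ℤ) :=
  {c, (c.1 + 1, c.2), (c.1, c.2 + 1), (c.1 + 1, c.2 + 1)}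

/-- Two cells share a common edge iff their lower-left corners are at distance one. -/
def cellAdj (c d : ℤ × ℤ) : Prop :=
  (c.1 - d.1).natAbs + (c.2 - d.2).natAbs = 1

section Geometry

lemma mem_cellVerts {v c : ℤ × ℤ} :
    v ∈ cellVerts c ↔ (v.1 = c.1 ∨ v.1 = c.1 + 1) ∧ (v.2 = c.2 ∨ v.2 = c.2 + 1) := by
  simp [cellVerts, Prod.ext_iff]
  omega

lemma card_cellVerts (c : ℤ × ℤ) : (cellVerts c).card = 4 := by
  rw [cellVerts]
  rw [Finset.card_insert_of_notMem (by simp [Prod.ext_iff]),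
      Finset.card_insert_of_notMem (by simp [Prod.ext_iff]),
      Finset.card_insert_of_notMem (by simp [Prod.ext_iff]),
      Finset.card_singleton]

def innC (p c q : ℤ × ℤ) : ℤ × ℤ :=
  ((if 2*c.1 < p.1 + q.1 then c.1 + 1 else c.1), (if 2*c.2 < p.2 + q.2 then c.2 + 1 else c.2))

def outC (p c q : ℤ × ℤ) : ℤ × ℤ :=
  (2*c.1 + 1 - (innC p c q).1, 2*c.2 + 1 - (innC p c q).2)

lemma innC_fst (p c q : ℤ × ℤ) :
    (innC p c q).1 = if 2*c.1 < p.1 + q.1 then c.1 + 1 else c.1 := rfl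
lemma innC_snd (p c q : ℤ × ℤ) :
    (innC p c q).2 = if 2*c.2 < p.2 + q.2 then c.2 + 1 else c.2 := rfl
lemma outC_fst (p c q : ℤ × ℤ) : (outC p c q).1 = 2*c.1 + 1 - (innC p c q).1 := rfl
lemma outC_snd (p c q : ℤ × ℤ) : (outC p c q).2 = 2*c.2 + 1 - (innC p c q).2 := rfl

lemma cellAdj_symm {c d : ℤ × ℤ} (h : cellAdj c d) : cellAdj d c := by
  unfold cellAdj at *; omega

lemma ne_pair {p q : ℤ × ℤ} (h : p ≠ q) : p.1 ≠ q.1 ∨ p.2 ≠ q.2 := by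
  by_contra hc; push_neg at hc; exact h (Prod.ext hc.1 hc.2)

lemma geom_mid {v c d e : ℤ × ℤ} (hc : v ∈ cellVerts c) (hd : v ∈ cellVerts d)
    (hcd : c ≠ d) (h1 : cellAdj c e) (h2 : cellAdj e d) : v ∈ cellVerts e := by
  simp only [mem_cellVerts] at *
  have := ne_pair hcd
  unfold cellAdj at h1 h2
  omega

lemma geom_straight {v p c q : ℤ × ℤ} (hp : cellAdj c p) (hq : cellAdj c q)
    (h1 : p.1 + q.1 = 2*c.1) (h2 : p.2 + q.2 = 2*c.2) (hv : v ∈ cellVerts c) :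
    (v ∈ cellVerts p ∨ v ∈ cellVerts q) ∧ ¬(v ∈ cellVerts p ∧ v ∈ cellVerts q) := by
  simp only [mem_cellVerts] at *
  unfold cellAdj at hp hq
  omega

lemma geom_inn {p c q : ℤ × ℤ} (hp : cellAdj c p) (hq : cellAdj c q) (hpq : p ≠ q)
    (ht : ¬(p.1 + q.1 = 2*c.1 ∧ p.2 + q.2 = 2*c.2)) :
    innC p c q ∈ cellVerts p ∧ innC p c q ∈ cellVerts c ∧ innC p c q ∈ cellVerts q := by
  have := ne_pair hpq
  unfold cellAdj at hp hq
  simp only [mem_cellVerts, innC_fst, innC_snd]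
  split_ifs <;> omega

lemma geom_out {p c q : ℤ × ℤ} (hp : cellAdj c p) (hq : cellAdj c q) (hpq : p ≠ q)
    (ht : ¬(p.1 + q.1 = 2*c.1 ∧ p.2 + q.2 = 2*c.2)) :
    outC p c q ∈ cellVerts c ∧ outC p c q ∉ cellVerts p ∧ outC p c q ∉ cellVerts q := by
  have := ne_pair hpq
  unfold cellAdj at hp hq
  simp only [mem_cellVerts, outC_fst, outC_snd, innC_fst, innC_snd]
  split_ifs <;> omega

lemma geom_inn_unique {v p c q : ℤ × ℤ} (hp : cellAdj c p) (hq : cellAdj c q) (hpq : p ≠ q)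
    (ht : ¬(p.1 + q.1 = 2*c.1 ∧ p.2 + q.2 = 2*c.2))
    (h1 : v ∈ cellVerts p) (h2 : v ∈ cellVerts c) (h3 : v ∈ cellVerts q) :
    v = innC p c q := by
  have := ne_pair hpq
  unfold cellAdj at hp hq
  simp only [mem_cellVerts] at h1 h2 h3
  rw [Prod.ext_iff]
  simp only [innC_fst, innC_snd]
  split_ifs <;> omega

set_option maxHeartbeats 1000000 in
lemma geom_out_unique {v p c q : ℤ × ℤ} (hp : cellAdj c p) (hq : cellAdj c q) (hpq : p ≠ q)
    (ht : ¬(p.1 + q.1 = 2*c.1 ∧ p.2 + q.2 = 2*c.2))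
    (h1 : v ∉ cellVerts p) (h2 : v ∈ cellVerts c) (h3 : v ∉ cellVerts q) :
    v = outC p c q := by
  have := ne_pair hpq
  unfold cellAdj at hp hq
  simp only [mem_cellVerts] at h1 h2 h3
  rw [Prod.ext_iff]
  simp only [outC_fst, outC_snd, innC_fst, innC_snd]
  split_ifs <;> omega

end Geometry

section Cyclic

lemma modfact {n : ℕ} (x : ℕ) (hx : x < 2*n) :
    (x % n = x ∧ x < n) ∨ x % n + n = x := by
  rcases Nat.lt_or_ge x n with h | h
  · exact Or.inl ⟨Nat.mod_eq_of_lt h, h⟩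
  · refine Or.inr ?_
    rw [Nat.mod_eq_sub_mod h, Nat.mod_eq_of_lt (by omega)]; omega

variable {n : ℕ} (hn : 5 < n) {i : ℕ} (hi : i < n)
include hn hi

lemma cycC1 : ((i+n-1)%n + 1)%n = i := by
  rcases modfact (n:=n) (i+n-1) (by omega) with ⟨h1,h1'⟩|h1 <;>
  · rcases modfact (n:=n) ((i+n-1)%n + 1) (by omega) with ⟨h2,_⟩|h2 <;> omega

lemma cycC2 : ((i+1)%n + n - 1)%n = i := by
  rcases modfact (n:=n) (i+1) (by omega) with ⟨h1,h1'⟩|h1 <;>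
  · rcases modfact (n:=n) ((i+1)%n + n - 1) (by omega) with ⟨h2,_⟩|h2 <;> omega

lemma cycC3 : ((i+1)%n + 1)%n = (i+2)%n := by
  rcases modfact (n:=n) (i+1) (by omega) with ⟨h1,h1'⟩|h1 <;>
  · rcases modfact (n:=n) ((i+1)%n + 1) (by omega) with ⟨h2,_⟩|h2 <;>
    rcases modfact (n:=n) (i+2) (by omega) with ⟨h3,_⟩|h3 <;> omega

lemma cycC4 : ((i+n-1)%n + n - 1)%n = (i+n-2)%n := by
  rcases modfact (n:=n) (i+n-1) (by omega) with ⟨h1,h1'⟩|h1 <;>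
  · rcases modfact (n:=n) ((i+n-1)%n + n - 1) (by omega) with ⟨h2,_⟩|h2 <;>
    rcases modfact (n:=n) (i+n-2) (by omega) with ⟨h3,_⟩|h3 <;> omega

lemma cycC5 : ((i+n-1)%n + 2)%n = (i+1)%n := by
  rcases modfact (n:=n) (i+n-1) (by omega) with ⟨h1,h1'⟩|h1 <;>
  · rcases modfact (n:=n) ((i+n-1)%n + 2) (by omega) with ⟨h2,_⟩|h2 <;>
    rcases modfact (n:=n) (i+1) (by omega) with ⟨h3,_⟩|h3 <;> omega

lemma cycC6 : ((i+1)%n + n - 2)%n = (i+n-1)%n := by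
  rcases modfact (n:=n) (i+1) (by omega) with ⟨h1,h1'⟩|h1 <;>
  · rcases modfact (n:=n) ((i+1)%n + n - 2) (by omega) with ⟨h2,_⟩|h2 <;>
    rcases modfact (n:=n) (i+n-1) (by omega) with ⟨h3,_⟩|h3 <;> omega

lemma cycC7 : ((i+n-1)%n + n - 2)%n = (i+n-3)%n := by
  rcases modfact (n:=n) (i+n-1) (by omega) with ⟨h1,h1'⟩|h1 <;>
  · rcases modfact (n:=n) ((i+n-1)%n + n - 2) (by omega) with ⟨h2,_⟩|h2 <;>
    rcases modfact (n:=n) (i+n-3) (by omega) with ⟨h3,_⟩|h3 <;> omega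

lemma cycC8 : ((i+1)%n + 2)%n = (i+3)%n := by
  rcases modfact (n:=n) (i+1) (by omega) with ⟨h1,h1'⟩|h1 <;>
  · rcases modfact (n:=n) ((i+1)%n + 2) (by omega) with ⟨h2,_⟩|h2 <;>
    rcases modfact (n:=n) (i+3) (by omega) with ⟨h3,_⟩|h3 <;> omega

lemma cycC9 : ((i+n-2)%n + 1)%n = (i+n-1)%n := by
  rcases modfact (n:=n) (i+n-2) (by omega) with ⟨h1,h1'⟩|h1 <;>
  · rcases modfact (n:=n) ((i+n-2)%n + 1) (by omega) with ⟨h2,_⟩|h2 <;>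
    rcases modfact (n:=n) (i+n-1) (by omega) with ⟨h3,_⟩|h3 <;> omega

lemma cycC12 : ((i+n-2)%n + 2)%n = i := by
  rcases modfact (n:=n) (i+n-2) (by omega) with ⟨h1,h1'⟩|h1 <;>
  · rcases modfact (n:=n) ((i+n-2)%n + 2) (by omega) with ⟨h2,_⟩|h2 <;> omega

lemma cycD0 : i ≠ (i+1)%n ∧ i ≠ (i+2)%n ∧ i ≠ (i+n-1)%n ∧ i ≠ (i+n-2)%n ∧
    (i+1)%n ≠ (i+2)%n ∧ (i+1)%n ≠ (i+n-1)%n ∧ (i+1)%n ≠ (i+n-2)%n ∧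
    (i+2)%n ≠ (i+n-1)%n ∧ (i+2)%n ≠ (i+n-2)%n ∧ (i+n-1)%n ≠ (i+n-2)%n := by
  rcases modfact (n:=n) (i+1) (by omega) with ⟨h1,_⟩|h1 <;>
  rcases modfact (n:=n) (i+2) (by omega) with ⟨h2,_⟩|h2 <;>
  rcases modfact (n:=n) (i+n-1) (by omega) with ⟨h3,_⟩|h3 <;>
  rcases modfact (n:=n) (i+n-2) (by omega) with ⟨h4,_⟩|h4 <;> omega

lemma cycD1 : (i+2)%n ≠ (i+n-3)%n ∧ (i+2)%n ≠ (i+n-2)%n ∧ (i+2)%n ≠ (i+n-1)%n ∧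
    (i+2)%n ≠ i ∧ (i+2)%n ≠ (i+1)%n := by
  rcases modfact (n:=n) (i+1) (by omega) with ⟨h1,_⟩|h1 <;>
  rcases modfact (n:=n) (i+2) (by omega) with ⟨h2,_⟩|h2 <;>
  rcases modfact (n:=n) (i+n-1) (by omega) with ⟨h3,_⟩|h3 <;>
  rcases modfact (n:=n) (i+n-2) (by omega) with ⟨h4,_⟩|h4 <;>
  rcases modfact (n:=n) (i+n-3) (by omega) with ⟨h5,_⟩|h5 <;> omega

lemma cycD2 : (i+n-2)%n ≠ (i+n-1)%n ∧ (i+n-2)%n ≠ i ∧ (i+n-2)%n ≠ (i+1)%n ∧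
    (i+n-2)%n ≠ (i+2)%n ∧ (i+n-2)%n ≠ (i+3)%n := by
  rcases modfact (n:=n) (i+1) (by omega) with ⟨h1,_⟩|h1 <;>
  rcases modfact (n:=n) (i+2) (by omega) with ⟨h2,_⟩|h2 <;>
  rcases modfact (n:=n) (i+3) (by omega) with ⟨h3,_⟩|h3 <;>
  rcases modfact (n:=n) (i+n-1) (by omega) with ⟨h4,_⟩|h4 <;>
  rcases modfact (n:=n) (i+n-2) (by omega) with ⟨h5,_⟩|h5 <;> omega

omit hi in
lemma cycLT (_ : i ≤ n) : (i+1)%n < n ∧ (i+2)%n < n ∧ (i+3)%n < n ∧ (i+n-1)%n < n ∧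
    (i+n-2)%n < n ∧ (i+n-3)%n < n :=
  ⟨Nat.mod_lt _ (by omega), Nat.mod_lt _ (by omega), Nat.mod_lt _ (by omega),
   Nat.mod_lt _ (by omega), Nat.mod_lt _ (by omega), Nat.mod_lt _ (by omega)⟩

end Cyclic

lemma card3' {a b c : ℕ} (hab : a ≠ b) (hac : a ≠ c) (hbc : b ≠ c) :
    ({a, b, c} : Finset ℕ).card = 3 := by
  rw [Finset.card_insert_of_notMem (by simp [hab, hac]),
      Finset.card_insert_of_notMem (by simp [hbc]), Finset.card_singleton]

/-- If `P` is a closed path polyomino, given by a cyclic sequence of cells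
`A 0, A 1, …, A (n-1)` (indices mod `n`, `n > 5`) with consecutive cells sharing an edge,
all cells distinct, and `V(A i) ∩ V(A j) = ∅` whenever `j ∉ {i-2, …, i+2}` mod `n`,
then `|V(P)| = 2 |P|`. -/
theorem closed_path_vertex_count (n : ℕ) (hn : 5 < n) (A : ℕ → ℤ × ℤ)
    (hinj : ∀ i < n, ∀ j < n, A i = A j → i = j)
    (hadj : ∀ i < n, cellAdj (A i) (A ((i + 1) % n)))
    (hfar : ∀ i < n, ∀ j < n,
      j ∉ ({(i + n - 2) % n, (i + n - 1) % n, i, (i + 1) % n, (i + 2) % n} : Set ℕ) →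
      cellVerts (A i) ∩ cellVerts (A j) = ∅) :
    ((Finset.range n).biUnion fun i => cellVerts (A i)).card = 2 * n := by
  classical
  set U := (Finset.range n).biUnion fun i => cellVerts (A i) with hU
  set S : ℤ × ℤ → Finset ℕ :=
    fun v => (Finset.range n).filter fun i => v ∈ cellVerts (A i) with hS
  have hSmem : ∀ v j, j ∈ S v ↔ j < n ∧ v ∈ cellVerts (A j) := by
    intro v j; simp [hS]
  have hUm : ∀ v, v ∈ U ↔ ∃ i, i < n ∧ v ∈ cellVerts (A i) := by
    intro v; simp [hU]
  -- adjacency to the predecessor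
  have hadjP : ∀ i, i < n → cellAdj (A i) (A ((i+n-1)%n)) := by
    intro i hi
    have h := hadj ((i+n-1)%n) ((cycLT hn (le_of_lt hi)).2.2.2.1)
    rw [cycC1 hn hi] at h
    exact cellAdj_symm h
  -- reformulated farness
  have hfar' : ∀ i, i < n → ∀ j, j < n → ∀ v, v ∈ cellVerts (A i) → v ∈ cellVerts (A j) →
      (j = (i+n-2)%n ∨ j = (i+n-1)%n ∨ j = i ∨ j = (i+1)%n ∨ j = (i+2)%n) := by
    intro i hi j hj v h1 h2
    by_contra hc
    push_neg at hc
    have hne := hfar i hi j hj (by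
      simp only [Set.mem_insert_iff, Set.mem_singleton_iff]
      tauto)
    have hv : v ∈ cellVerts (A i) ∩ cellVerts (A j) := Finset.mem_inter.mpr ⟨h1, h2⟩
    rw [hne] at hv
    exact absurd hv (Finset.notMem_empty v)
  -- forward middle lemma
  have hG1 : ∀ i, i < n → ∀ v, v ∈ cellVerts (A i) → v ∈ cellVerts (A ((i+2)%n)) →
      v ∈ cellVerts (A ((i+1)%n)) := by
    intro i hi v h1 h2
    refine geom_mid h1 h2 ?_ (hadj i hi) ?_
    · intro he
      exact (cycD0 hn hi).2.1 (hinj i hi ((i+2)%n) ((cycLT hn (le_of_lt hi)).2.1) he)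
    · have h := hadj ((i+1)%n) ((cycLT hn (le_of_lt hi)).1)
      rwa [cycC3 hn hi] at h
  -- backward middle lemma
  have hG1' : ∀ i, i < n → ∀ v, v ∈ cellVerts (A ((i+n-2)%n)) → v ∈ cellVerts (A i) →
      v ∈ cellVerts (A ((i+n-1)%n)) := by
    intro i hi v h1 h2
    have h := hG1 ((i+n-2)%n) ((cycLT hn (le_of_lt hi)).2.2.2.2.1) v h1
      (by rwa [cycC12 hn hi])
    rwa [cycC9 hn hi] at h
  -- two cells at cyclic distance ≥ 3 never share a vertex (two instances)
  have hclaimA : ∀ i, i < n → ∀ v, v ∈ cellVerts (A ((i+n-1)%n)) →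
      v ∈ cellVerts (A ((i+2)%n)) → False := by
    intro i hi v h1 h2
    have hw := hfar' ((i+n-1)%n) ((cycLT hn (le_of_lt hi)).2.2.2.1) ((i+2)%n)
      ((cycLT hn (le_of_lt hi)).2.1) v h1 h2
    rw [cycC7 hn hi, cycC4 hn hi, cycC1 hn hi, cycC5 hn hi] at hw
    obtain ⟨e1, e2, e3, e4, e5⟩ := cycD1 hn hi
    rcases hw with h|h|h|h|h
    exacts [e1 h, e2 h, e3 h, e4 h, e5 h]
  have hclaimB : ∀ i, i < n → ∀ v, v ∈ cellVerts (A ((i+n-2)%n)) →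
      v ∈ cellVerts (A ((i+1)%n)) → False := by
    intro i hi v h1 h2
    have hw := hfar' ((i+1)%n) ((cycLT hn (le_of_lt hi)).1) ((i+n-2)%n)
      ((cycLT hn (le_of_lt hi)).2.2.2.2.1) v h2 h1
    rw [cycC6 hn hi, cycC2 hn hi, cycC3 hn hi, cycC8 hn hi] at hw
    obtain ⟨e1, e2, e3, e4, e5⟩ := cycD2 hn hi
    rcases hw with h|h|h|h|h
    exacts [e1 h, e2 h, e3 h, e4 h, e5 h]
  -- classification of vertex stabilizers
  have hclass : ∀ v ∈ U, (∃ m, m < n ∧ S v = {m}) ∨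
      (∃ m, m < n ∧ S v = {m, (m+1)%n}) ∨
      (∃ m, m < n ∧ S v = {(m+n-1)%n, m, (m+1)%n}) := by
    intro v hv
    obtain ⟨i, hi, hvi⟩ := (hUm v).1 hv
    have hwin : ∀ j ∈ S v, j = (i+n-2)%n ∨ j = (i+n-1)%n ∨ j = i ∨ j = (i+1)%n ∨
        j = (i+2)%n := by
      intro j hj
      obtain ⟨hj1, hj2⟩ := (hSmem v j).1 hj
      exact hfar' i hi j hj1 v hvi hj2
    have hiS : i ∈ S v := (hSmem v i).2 ⟨hi, hvi⟩
    obtain ⟨l1, l2, l3, l4, l5, l6⟩ := cycLT hn (le_of_lt hi)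
    by_cases h2 : (i+2)%n ∈ S v
    · have hv2 : v ∈ cellVerts (A ((i+2)%n)) := ((hSmem _ _).1 h2).2
      have h1 : (i+1)%n ∈ S v := (hSmem _ _).2 ⟨l1, hG1 i hi v hvi hv2⟩
      have hv1 : v ∈ cellVerts (A ((i+1)%n)) := ((hSmem _ _).1 h1).2
      refine Or.inr (Or.inr ⟨(i+1)%n, l1, ?_⟩)
      rw [cycC2 hn hi, cycC3 hn hi]
      ext j
      simp only [Finset.mem_insert, Finset.mem_singleton]
      constructor
      · intro hj
        rcases hwin j hj with h|h|h|h|h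
        · exact absurd (hclaimB i hi v (h ▸ ((hSmem v j).1 hj).2) hv1) not_false
        · exact absurd (hclaimA i hi v (h ▸ ((hSmem v j).1 hj).2) hv2) not_false
        · exact Or.inl h
        · exact Or.inr (Or.inl h)
        · exact Or.inr (Or.inr h)
      · rintro (h|h|h) <;> subst h
        exacts [hiS, h1, h2]
    · by_cases hm2 : (i+n-2)%n ∈ S v
      · have hv2 : v ∈ cellVerts (A ((i+n-2)%n)) := ((hSmem _ _).1 hm2).2
        have hm1 : (i+n-1)%n ∈ S v := (hSmem _ _).2 ⟨l4, hG1' i hi v hv2 hvi⟩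
        have hv1 : v ∈ cellVerts (A ((i+n-1)%n)) := ((hSmem _ _).1 hm1).2
        refine Or.inr (Or.inr ⟨(i+n-1)%n, l4, ?_⟩)
        rw [cycC4 hn hi, cycC1 hn hi]
        ext j
        simp only [Finset.mem_insert, Finset.mem_singleton]
        constructor
        · intro hj
          rcases hwin j hj with h|h|h|h|h
          · exact Or.inl h
          · exact Or.inr (Or.inl h)
          · exact Or.inr (Or.inr h)
          · exact absurd (hclaimB i hi v hv2 (h ▸ ((hSmem v j).1 hj).2)) not_false
          · exact absurd (h ▸ hj : (i+2)%n ∈ S v) h2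
        · rintro (h|h|h) <;> subst h
          exacts [hm2, hm1, hiS]
      · by_cases h1 : (i+1)%n ∈ S v
        · by_cases hm1 : (i+n-1)%n ∈ S v
          · refine Or.inr (Or.inr ⟨i, hi, ?_⟩)
            ext j
            simp only [Finset.mem_insert, Finset.mem_singleton]
            constructor
            · intro hj
              rcases hwin j hj with h|h|h|h|h
              · exact absurd (h ▸ hj : (i+n-2)%n ∈ S v) hm2
              · exact Or.inl h
              · exact Or.inr (Or.inl h)
              · exact Or.inr (Or.inr h)
              · exact absurd (h ▸ hj : (i+2)%n ∈ S v) h2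
            · rintro (h|h|h) <;> subst h
              exacts [hm1, hiS, h1]
          · refine Or.inr (Or.inl ⟨i, hi, ?_⟩)
            ext j
            simp only [Finset.mem_insert, Finset.mem_singleton]
            constructor
            · intro hj
              rcases hwin j hj with h|h|h|h|h
              · exact absurd (h ▸ hj : (i+n-2)%n ∈ S v) hm2
              · exact absurd (h ▸ hj : (i+n-1)%n ∈ S v) hm1
              · exact Or.inl h
              · exact Or.inr h
              · exact absurd (h ▸ hj : (i+2)%n ∈ S v) h2
            · rintro (h|h) <;> subst h
              exacts [hiS, h1]
        · by_cases hm1 : (i+n-1)%n ∈ S v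
          · refine Or.inr (Or.inl ⟨(i+n-1)%n, l4, ?_⟩)
            rw [cycC1 hn hi]
            ext j
            simp only [Finset.mem_insert, Finset.mem_singleton]
            constructor
            · intro hj
              rcases hwin j hj with h|h|h|h|h
              · exact absurd (h ▸ hj : (i+n-2)%n ∈ S v) hm2
              · exact Or.inl h
              · exact Or.inr h
              · exact absurd (h ▸ hj : (i+1)%n ∈ S v) h1
              · exact absurd (h ▸ hj : (i+2)%n ∈ S v) h2
            · rintro (h|h) <;> subst h
              exacts [hm1, hiS]
          · refine Or.inl ⟨i, hi, ?_⟩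
            ext j
            simp only [Finset.mem_singleton]
            constructor
            · intro hj
              rcases hwin j hj with h|h|h|h|h
              · exact absurd (h ▸ hj : (i+n-2)%n ∈ S v) hm2
              · exact absurd (h ▸ hj : (i+n-1)%n ∈ S v) hm1
              · exact h
              · exact absurd (h ▸ hj : (i+1)%n ∈ S v) h1
              · exact absurd (h ▸ hj : (i+2)%n ∈ S v) h2
            · intro h; subst h; exact hiS
  -- turn-cell data
  have hpqne : ∀ m, m < n → A ((m+n-1)%n) ≠ A ((m+1)%n) := by
    intro m hm he
    have := hinj _ ((cycLT hn (le_of_lt hm)).2.2.2.1) _ ((cycLT hn (le_of_lt hm)).1) he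
    exact (cycD0 hn hm).2.2.2.2.2.1 this.symm
  -- singleton stabilizer comes from a turn, vertex is the outer corner
  have hsing : ∀ v, ∀ m, m < n → S v = {m} →
      ¬((A ((m+n-1)%n)).1 + (A ((m+1)%n)).1 = 2*(A m).1 ∧
        (A ((m+n-1)%n)).2 + (A ((m+1)%n)).2 = 2*(A m).2) ∧
      v = outC (A ((m+n-1)%n)) (A m) (A ((m+1)%n)) := by
    intro v m hm hSv
    obtain ⟨l1, l2, l3, l4, l5, l6⟩ := cycLT hn (le_of_lt hm)
    obtain ⟨d1, d2, d3, d4, d5, d6, d7, d8, d9, d10⟩ := cycD0 hn hm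
    have hvc : v ∈ cellVerts (A m) :=
      ((hSmem v m).1 (by rw [hSv]; exact Finset.mem_singleton_self m)).2
    have hnp : v ∉ cellVerts (A ((m+n-1)%n)) := by
      intro h
      have hmem : (m+n-1)%n ∈ S v := (hSmem _ _).2 ⟨l4, h⟩
      rw [hSv, Finset.mem_singleton] at hmem
      exact d3 hmem.symm
    have hnq : v ∉ cellVerts (A ((m+1)%n)) := by
      intro h
      have hmem : (m+1)%n ∈ S v := (hSmem _ _).2 ⟨l1, h⟩
      rw [hSv, Finset.mem_singleton] at hmem
      exact d1 hmem.symm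
    have hT : ¬((A ((m+n-1)%n)).1 + (A ((m+1)%n)).1 = 2*(A m).1 ∧
        (A ((m+n-1)%n)).2 + (A ((m+1)%n)).2 = 2*(A m).2) := by
      rintro ⟨hx, hy⟩
      rcases (geom_straight (hadjP m hm) (hadj m hm) hx hy hvc).1 with h|h
      exacts [hnp h, hnq h]
    exact ⟨hT, geom_out_unique (hadjP m hm) (hadj m hm) (hpqne m hm) hT hnp hvc hnq⟩
  -- triple stabilizer comes from a turn, vertex is the inner corner
  have htrip : ∀ v, ∀ m, m < n → S v = {(m+n-1)%n, m, (m+1)%n} →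
      ¬((A ((m+n-1)%n)).1 + (A ((m+1)%n)).1 = 2*(A m).1 ∧
        (A ((m+n-1)%n)).2 + (A ((m+1)%n)).2 = 2*(A m).2) ∧
      v = innC (A ((m+n-1)%n)) (A m) (A ((m+1)%n)) := by
    intro v m hm hSv
    have hvp : v ∈ cellVerts (A ((m+n-1)%n)) :=
      ((hSmem _ _).1 (by rw [hSv]; simp)).2
    have hvc : v ∈ cellVerts (A m) :=
      ((hSmem _ _).1 (by rw [hSv]; simp)).2
    have hvq : v ∈ cellVerts (A ((m+1)%n)) :=
      ((hSmem _ _).1 (by rw [hSv]; simp)).2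
    have hT : ¬((A ((m+n-1)%n)).1 + (A ((m+1)%n)).1 = 2*(A m).1 ∧
        (A ((m+n-1)%n)).2 + (A ((m+1)%n)).2 = 2*(A m).2) := by
      rintro ⟨hx, hy⟩
      exact (geom_straight (hadjP m hm) (hadj m hm) hx hy hvc).2 ⟨hvp, hvq⟩
    exact ⟨hT, geom_inn_unique (hadjP m hm) (hadj m hm) (hpqne m hm) hT hvp hvc hvq⟩
  -- stabilizers of the two corners of a turn
  have hSout : ∀ m, m < n →
      ¬((A ((m+n-1)%n)).1 + (A ((m+1)%n)).1 = 2*(A m).1 ∧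
        (A ((m+n-1)%n)).2 + (A ((m+1)%n)).2 = 2*(A m).2) →
      S (outC (A ((m+n-1)%n)) (A m) (A ((m+1)%n))) = {m} := by
    intro m hm hT
    obtain ⟨ho1, ho2, ho3⟩ := geom_out (hadjP m hm) (hadj m hm) (hpqne m hm) hT
    ext j
    simp only [Finset.mem_singleton]
    constructor
    · intro hj
      obtain ⟨hjn, hjv⟩ := (hSmem _ _).1 hj
      rcases hfar' m hm j hjn _ ho1 hjv with h|h|h|h|h
      · exact absurd (hG1' m hm _ (h ▸ hjv) ho1) ho2
      · exact absurd (h ▸ hjv) ho2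
      · exact h
      · exact absurd (h ▸ hjv) ho3
      · exact absurd (hG1 m hm _ ho1 (h ▸ hjv)) ho3
    · intro h; subst h; exact (hSmem _ _).2 ⟨hm, ho1⟩
  have hSinn : ∀ m, m < n →
      ¬((A ((m+n-1)%n)).1 + (A ((m+1)%n)).1 = 2*(A m).1 ∧
        (A ((m+n-1)%n)).2 + (A ((m+1)%n)).2 = 2*(A m).2) →
      S (innC (A ((m+n-1)%n)) (A m) (A ((m+1)%n))) = {(m+n-1)%n, m, (m+1)%n} := by
    intro m hm hT
    obtain ⟨hi1, hi2, hi3⟩ := geom_inn (hadjP m hm) (hadj m hm) (hpqne m hm) hT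
    obtain ⟨l1, l2, l3, l4, l5, l6⟩ := cycLT hn (le_of_lt hm)
    ext j
    simp only [Finset.mem_insert, Finset.mem_singleton]
    constructor
    · intro hj
      obtain ⟨hjn, hjv⟩ := (hSmem _ _).1 hj
      rcases hfar' m hm j hjn _ hi2 hjv with h|h|h|h|h
      · exact absurd (hclaimB m hm _ (h ▸ hjv) hi3) not_false
      · exact Or.inl h
      · exact Or.inr (Or.inl h)
      · exact Or.inr (Or.inr h)
      · exact absurd (hclaimA m hm _ hi1 (h ▸ hjv)) not_false
    · rintro (h|h|h) <;> subst h
      exacts [(hSmem _ _).2 ⟨l4, hi1⟩, (hSmem _ _).2 ⟨hm, hi2⟩, (hSmem _ _).2 ⟨l1, hi3⟩]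
  -- the turn set
  set Trn : Finset ℕ := (Finset.range n).filter (fun m =>
      ¬((A ((m+n-1)%n)).1 + (A ((m+1)%n)).1 = 2*(A m).1 ∧
        (A ((m+n-1)%n)).2 + (A ((m+1)%n)).2 = 2*(A m).2)) with hTrn
  have hTrnMem : ∀ m, m ∈ Trn ↔ m < n ∧
      ¬((A ((m+n-1)%n)).1 + (A ((m+1)%n)).1 = 2*(A m).1 ∧
        (A ((m+n-1)%n)).2 + (A ((m+1)%n)).2 = 2*(A m).2) := by
    intro m; simp [hTrn]
  set T1 : Finset (ℤ × ℤ) := U.filter (fun v => (S v).card = 1) with hT1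
  set T2 : Finset (ℤ × ℤ) := U.filter (fun v => (S v).card = 2) with hT2
  set T3 : Finset (ℤ × ℤ) := U.filter (fun v => (S v).card = 3) with hT3
  -- triple-interval determines its center
  have hcenter : ∀ m, m < n → ∀ m', m' < n →
      ({(m+n-1)%n, m, (m+1)%n} : Finset ℕ) = {(m'+n-1)%n, m', (m'+1)%n} → m = m' := by
    intro m hm m' hm' he
    obtain ⟨d1, d2, d3, d4, d5, d6, d7, d8, d9, d10⟩ := cycD0 hn hm
    have hmem : m ∈ ({(m'+n-1)%n, m', (m'+1)%n} : Finset ℕ) := by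
      rw [← he]; simp
    simp only [Finset.mem_insert, Finset.mem_singleton] at hmem
    rcases hmem with h|h|h
    · -- m = prev m', so m' = next m; then next m' ∈ LHS gives contradiction
      have hm'eq : m' = (m+1)%n := by
        have := cycC1 hn hm'
        rw [← h] at this
        exact this.symm
      have hmem2 : (m'+1)%n ∈ ({(m+n-1)%n, m, (m+1)%n} : Finset ℕ) := by
        rw [he]; simp
      rw [hm'eq, cycC3 hn hm] at hmem2
      simp only [Finset.mem_insert, Finset.mem_singleton] at hmem2
      rcases hmem2 with h'|h'|h'
      exacts [absurd h'.symm d8.symm, absurd h'.symm d2,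
        absurd h' (d5.symm ∘ Eq.symm ∘ Eq.symm ∘ id ∘ fun x => x)]
    · exact h
    · -- m = next m', so m' = prev m; then prev m' ∈ LHS gives contradiction
      have hm'eq : m' = (m+n-1)%n := by
        have := cycC2 hn hm'
        rw [← h] at this
        exact this.symm
      have hmem2 : (m'+n-1)%n ∈ ({(m+n-1)%n, m, (m+1)%n} : Finset ℕ) := by
        rw [he]; simp
      rw [hm'eq, cycC4 hn hm] at hmem2
      simp only [Finset.mem_insert, Finset.mem_singleton] at hmem2
      rcases hmem2 with h'|h'|h'
      exacts [absurd h'.symm d10, absurd h'.symm d4, absurd h'.symm d7]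
  -- |T3| = |Trn|
  have hb3 : Trn.card = T3.card := by
    apply Finset.card_bij (fun m _ => innC (A ((m+n-1)%n)) (A m) (A ((m+1)%n)))
    · intro m hmT
      obtain ⟨hm, hT⟩ := (hTrnMem m).1 hmT
      have hUmem : innC (A ((m+n-1)%n)) (A m) (A ((m+1)%n)) ∈ U :=
        (hUm _).2 ⟨m, hm, (geom_inn (hadjP m hm) (hadj m hm) (hpqne m hm) hT).2.1⟩
      rw [hT3, Finset.mem_filter]
      refine ⟨hUmem, ?_⟩
      rw [hSinn m hm hT]
      obtain ⟨d1, d2, d3, d4, d5, d6, d7, d8, d9, d10⟩ := cycD0 hn hm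
      exact card3' (Ne.symm d3) d6.symm d1
    · intro m hmT m' hmT' he
      obtain ⟨hm, hT⟩ := (hTrnMem m).1 hmT
      obtain ⟨hm', hT'⟩ := (hTrnMem m').1 hmT'
      have e1 := hSinn m hm hT
      have e2 := hSinn m' hm' hT'
      rw [he] at e1
      exact hcenter m hm m' hm' (e1.symm.trans e2)
    · intro v hv
      rw [hT3, Finset.mem_filter] at hv
      obtain ⟨hvU, hv3⟩ := hv
      rcases hclass v hvU with ⟨m, hm, hSv⟩ | ⟨m, hm, hSv⟩ | ⟨m, hm, hSv⟩
      · rw [hSv, Finset.card_singleton] at hv3; omega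
      · rw [hSv, Finset.card_pair (cycD0 hn hm).1] at hv3; omega
      · obtain ⟨hT, hveq⟩ := htrip v m hm hSv
        exact ⟨m, (hTrnMem m).2 ⟨hm, hT⟩, hveq.symm⟩
  -- |T1| = |Trn|
  have hb1 : Trn.card = T1.card := by
    apply Finset.card_bij (fun m _ => outC (A ((m+n-1)%n)) (A m) (A ((m+1)%n)))
    · intro m hmT
      obtain ⟨hm, hT⟩ := (hTrnMem m).1 hmT
      have hUmem : outC (A ((m+n-1)%n)) (A m) (A ((m+1)%n)) ∈ U :=
        (hUm _).2 ⟨m, hm, (geom_out (hadjP m hm) (hadj m hm) (hpqne m hm) hT).1⟩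
      rw [hT1, Finset.mem_filter]
      refine ⟨hUmem, ?_⟩
      rw [hSout m hm hT, Finset.card_singleton]
    · intro m hmT m' hmT' he
      obtain ⟨hm, hT⟩ := (hTrnMem m).1 hmT
      obtain ⟨hm', hT'⟩ := (hTrnMem m').1 hmT'
      have e1 := hSout m hm hT
      have e2 := hSout m' hm' hT'
      rw [he] at e1
      have := e1.symm.trans e2
      exact Finset.singleton_injective this
    · intro v hv
      rw [hT1, Finset.mem_filter] at hv
      obtain ⟨hvU, hv1⟩ := hv
      rcases hclass v hvU with ⟨m, hm, hSv⟩ | ⟨m, hm, hSv⟩ | ⟨m, hm, hSv⟩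
      · obtain ⟨hT, hveq⟩ := hsing v m hm hSv
        exact ⟨m, (hTrnMem m).2 ⟨hm, hT⟩, hveq.symm⟩
      · rw [hSv, Finset.card_pair (cycD0 hn hm).1] at hv1; omega
      · rw [hSv] at hv1
        obtain ⟨d1, d2, d3, d4, d5, d6, d7, d8, d9, d10⟩ := cycD0 hn hm
        rw [card3' (Ne.symm d3) d6.symm d1] at hv1; omega
  -- every stabilizer has size 1, 2 or 3
  have hcard3 : ∀ v ∈ U, (S v).card = 1 ∨ (S v).card = 2 ∨ (S v).card = 3 := by
    intro v hv
    rcases hclass v hv with ⟨m, hm, hSv⟩ | ⟨m, hm, hSv⟩ | ⟨m, hm, hSv⟩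
    · left; rw [hSv, Finset.card_singleton]
    · right; left; rw [hSv, Finset.card_pair (cycD0 hn hm).1]
    · right; right
      obtain ⟨d1, d2, d3, d4, d5, d6, d7, d8, d9, d10⟩ := cycD0 hn hm
      rw [hSv, card3' (Ne.symm d3) d6.symm d1]
  -- double counting
  have hsum1 : ∑ i ∈ Finset.range n, (cellVerts (A i)).card = ∑ v ∈ U, (S v).card := by
    have h1 : ∀ i ∈ Finset.range n, (cellVerts (A i)).card =
        ∑ v ∈ U, (if v ∈ cellVerts (A i) then 1 else 0) := by
      intro i hi
      rw [← Finset.card_filter]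
      congr 1
      ext v
      simp only [Finset.mem_filter]
      constructor
      · intro h
        exact ⟨(hUm v).2 ⟨i, Finset.mem_range.1 hi, h⟩, h⟩
      · exact fun h => h.2
    rw [Finset.sum_congr rfl h1, Finset.sum_comm]
    refine Finset.sum_congr rfl fun v _ => ?_
    rw [hS]
    exact (Finset.card_filter _ _).symm
  have hsum4 : ∑ i ∈ Finset.range n, (cellVerts (A i)).card = 4 * n := by
    rw [Finset.sum_congr rfl fun i _ => card_cellVerts (A i), Finset.sum_const,
      Finset.card_range, smul_eq_mul, mul_comm]
  have hsum2 : ∑ v ∈ U, (S v).card = T1.card + 2 * T2.card + 3 * T3.card := by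
    have hsplit : ∀ v ∈ U, (S v).card =
        (if (S v).card = 1 then 1 else 0) + (if (S v).card = 2 then 2 else 0) +
        (if (S v).card = 3 then 3 else 0) := by
      intro v hv
      rcases hcard3 v hv with h|h|h <;> rw [h] <;> norm_num
    rw [Finset.sum_congr rfl hsplit, Finset.sum_add_distrib, Finset.sum_add_distrib]
    have e1 : ∑ v ∈ U, (if (S v).card = 1 then 1 else 0) = T1.card := by
      rw [hT1, Finset.card_filter]
    have e2 : ∑ v ∈ U, (if (S v).card = 2 then 2 else 0) = 2 * T2.card := by
      rw [hT2, Finset.card_filter, Finset.mul_sum]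
      refine Finset.sum_congr rfl fun v _ => ?_
      split_ifs <;> norm_num
    have e3 : ∑ v ∈ U, (if (S v).card = 3 then 3 else 0) = 3 * T3.card := by
      rw [hT3, Finset.card_filter, Finset.mul_sum]
      refine Finset.sum_congr rfl fun v _ => ?_
      split_ifs <;> norm_num
    rw [e1, e2, e3]
  have hsumU : U.card = T1.card + T2.card + T3.card := by
    have hsplit : ∀ v ∈ U, (1 : ℕ) =
        (if (S v).card = 1 then 1 else 0) + (if (S v).card = 2 then 1 else 0) +
        (if (S v).card = 3 then 1 else 0) := by
      intro v hv
      rcases hcard3 v hv with h|h|h <;> rw [h] <;> norm_num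
    rw [Finset.card_eq_sum_ones, Finset.sum_congr rfl hsplit, Finset.sum_add_distrib,
      Finset.sum_add_distrib]
    rw [hT1, hT2, hT3, Finset.card_filter, Finset.card_filter, Finset.card_filter]
  omega
end

section
/- Let Δ be a shellable pure simplicial complex with shelling F_1,...,F_m, and for i ≥ 2 let c_i be the number of minimal generators of ⟨F_1,...,F_{i−1}⟩ ∩ ⟨F_i⟩ (set c_1 = 0). Then the h-polynomial of K[Δ] equals Σ_{i=1}^m t^{c_i} (McMullen–Walkup). -/
open MvPolynomial

/-- The Stanley–Reisner ideal of a collection `Δ` of subsets of `Fin n`. -/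
noncomputable def srIdeal (K : Type) [Field K] (n : ℕ) (Δ : Set (Finset (Fin n))) :
    Ideal (MvPolynomial (Fin n) K) :=
  Ideal.span {p | ∃ F : Finset (Fin n), F ∉ Δ ∧ p = ∏ i ∈ F, X i}

/-- Dimension of the degree-`k` graded component of `S/I`, `S = K[x_1,…,x_n]`. -/
noncomputable def hilbFn (K : Type) [Field K] (n : ℕ) (I : Ideal (MvPolynomial (Fin n) K))
    (k : ℕ) : ℕ :=
  Module.finrank K
    ((homogeneousSubmodule (Fin n) K k) ⧸
      (Submodule.comap (homogeneousSubmodule (Fin n) K k).subtype (Submodule.restrictScalars K I)))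

/-- The Hilbert–Poincaré series of `S/I`, as an integer power series. -/
noncomputable def hilbSeries (K : Type) [Field K] (n : ℕ) (I : Ideal (MvPolynomial (Fin n) K)) :
    PowerSeries ℤ :=
  PowerSeries.mk fun k => (hilbFn K n I k : ℤ)

open scoped Classical in
/-- `restCard F i` is the size of the restriction of the facet `F i` in the shelling
`F 0, …, F (i-1), F i, …`: the number of vertices `v ∈ F i` with
`F i \ {v} ∈ ⟨F 0, …, F (i-1)⟩`; equivalently, the number of minimal generators of
`⟨F 0, …, F (i-1)⟩ ∩ ⟨F i⟩`. -/
noncomputable def restCard {n : ℕ} (F : ℕ → Finset (Fin n)) (i : ℕ) : ℕ :=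
  ((F i).filter fun v => ∃ j < i, (F i).erase v ⊆ F j).card

/-!
A shelling partitions the faces of `Δ` into the disjoint intervals `[R i, F i]`, where `R i` is
the restriction of `F i`: a face lies in the interval of the first facet containing it, and the
shelling condition rules out any other. The monomials whose support is a face form a `K`-basis of
`K[Δ]`, so they split along the same partition, and the monomials of support in `[R, F]` are
`x^R` times the monomials supported on `F`, with generating function `t^#R / (1 - t)^#F`.
Since every facet has `d` vertices, `HP(t) = (∑ i, t^{c i}) / (1 - t)^d`.
-/

open Finset

namespace Finsupp

variable {σ : Type*}

noncomputable def indicatorOne (s : Finset σ) : σ →₀ ℕ := ∑ i ∈ s, single i 1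

theorem indicatorOne_apply [DecidableEq σ] (s : Finset σ) (i : σ) :
    indicatorOne s i = if i ∈ s then 1 else 0 := by
  simp [indicatorOne, finsetSum_apply, single_apply]

@[simp]
theorem support_indicatorOne (s : Finset σ) : (indicatorOne s).support = s := by
  classical
  ext i
  simp [indicatorOne_apply]

@[simp]
theorem degree_indicatorOne (s : Finset σ) : (indicatorOne s).degree = #s := by
  simp [indicatorOne]

theorem indicatorOne_le_iff {s : Finset σ} {α : σ →₀ ℕ} :
    indicatorOne s ≤ α ↔ s ⊆ α.support := by
  classical
  simp only [le_def, indicatorOne_apply, subset_iff, mem_support_iff]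
  refine forall_congr' fun i => ?_
  split_ifs <;> simp [Nat.one_le_iff_ne_zero, *]

end Finsupp

theorem MvPolynomial.prod_X_eq_monomial_indicatorOne {σ R : Type*} [CommSemiring R]
    (s : Finset σ) : ∏ i ∈ s, (X i : MvPolynomial σ R) = monomial (Finsupp.indicatorOne s) 1 :=
  (monomial_sum_one s _).symm

theorem mem_srIdeal_iff {K : Type} [Field K] {n : ℕ} {Δ : Set (Finset (Fin n))}
    (hdown : ∀ F F' : Finset (Fin n), F' ∈ Δ → F ⊆ F' → F ∈ Δ) {p : MvPolynomial (Fin n) K} :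
    p ∈ srIdeal K n Δ ↔ ∀ α ∈ p.support, α.support ∉ Δ := by
  have hspan : srIdeal K n Δ =
      Ideal.span ((monomial · 1) '' (Finsupp.indicatorOne '' {F | F ∉ Δ})) := by
    simp only [srIdeal, prod_X_eq_monomial_indicatorOne, Set.image_image]
    congr 1
    ext p
    simp [eq_comm]
  rw [hspan, mem_ideal_span_monomial_image]
  refine forall₂_congr fun α _ => ?_
  simp only [Set.mem_image, Set.mem_ofPred_eq, exists_exists_and_eq_and,
    Finsupp.indicatorOne_le_iff]
  exact ⟨fun ⟨G, hG, hGα⟩ hα => hG (hdown _ _ hα hGα), fun hα => ⟨_, hα, subset_rfl⟩⟩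

theorem Finset.mem_finsuppAntidiag_iff_degree {σ : Type*} [DecidableEq σ] {s : Finset σ}
    {α : σ →₀ ℕ} {k : ℕ} :
    α ∈ finsuppAntidiag s k ↔ α.degree = k ∧ α.support ⊆ s := by
  rw [mem_finsuppAntidiag, and_congr_left_iff]
  intro hα
  rw [Finsupp.degree_apply, sum_subset hα fun _ _ h => Finsupp.notMem_support_iff.1 h]

theorem hilbFn_eq_card_of_mem_iff {K : Type} [Field K] {n : ℕ}
    {I : Ideal (MvPolynomial (Fin n) K)} {P : (Fin n →₀ ℕ) → Prop} [DecidablePred P]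
    (hI : ∀ p, p ∈ I ↔ ∀ α ∈ p.support, ¬ P α) (k : ℕ) :
    hilbFn K n I k = #{α ∈ finsuppAntidiag (univ : Finset (Fin n)) k | P α} := by
  set V := homogeneousSubmodule (Fin n) K k
  set T := {α ∈ finsuppAntidiag (univ : Finset (Fin n)) k | P α}
  have hT {α} : α ∈ T ↔ α.degree = k ∧ P α := by
    simp only [T, mem_filter, mem_finsuppAntidiag_iff_degree, subset_univ, and_true]
  let φ : V →ₗ[K] (T → K) := LinearMap.pi fun α => (lcoeff K α.1).comp V.subtype
  have hφ (p : V) (α : T) : φ p α = coeff α.1 p.1 := rfl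
  have hker : LinearMap.ker φ = (I.restrictScalars K).comap V.subtype := by
    ext p
    have hdeg {α} (hα : α ∈ p.1.support) : α.degree = k := by
      by_contra hne
      exact mem_support_iff.1 hα (IsHomogeneous.coeff_eq_zero p.2 hne)
    simp only [LinearMap.mem_ker, Submodule.mem_comap, Submodule.restrictScalars_mem, hI,
      _root_.funext_iff, hφ, Pi.zero_apply, Subtype.forall, hT]
    refine ⟨fun h α hα hP => mem_support_iff.1 hα (h α ⟨hdeg hα, hP⟩), fun h α hα => ?_⟩
    by_contra hne
    exact h α (mem_support_iff.2 hne) hα.2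
  have hsurj : Function.Surjective φ := by
    intro f
    have hmem : ∑ α : T, monomial α.1 (f α) ∈ V :=
      Submodule.sum_mem _ fun α _ => isHomogeneous_monomial _ (hT.1 α.2).1
    refine ⟨⟨_, hmem⟩, funext fun β => ?_⟩
    rw [hφ, coeff_sum, Finset.sum_eq_single β]
    · simp
    · intro α _ hne
      rw [coeff_monomial, if_neg (fun h => hne (Subtype.ext h))]
    · simp
  rw [hilbFn, ← hker, (φ.quotKerEquivOfSurjective hsurj).finrank_eq,
    Module.finrank_fintype_fun_eq_card, Fintype.card_coe]

section Shelling

variable {σ : Type*} {Δ : Set (Finset σ)} {F : ℕ → Finset σ} {m : ℕ}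

theorem exists_lt_subset_of_mem [Finite σ]
    (hfacets : ∀ G : Finset σ, (G ∈ Δ ∧ ∀ G' ∈ Δ, G ⊆ G' → G = G') ↔ ∃ i < m, G = F i)
    {G : Finset σ} (hG : G ∈ Δ) : ∃ i < m, G ⊆ F i := by
  obtain ⟨H, hGH, hH⟩ := (Set.toFinite Δ).exists_le_maximal hG
  obtain ⟨i, hi, rfl⟩ := (hfacets H).1 ⟨hH.prop, fun G' hG' hHG' => (hH.eq_of_le hG' hHG')⟩
  exact ⟨i, hi, hGH⟩

variable [DecidableEq σ]

open scoped Classical in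
noncomputable def restriction (F : ℕ → Finset σ) (i : ℕ) : Finset σ :=
  {v ∈ F i | ∃ j < i, (F i).erase v ⊆ F j}

theorem restriction_subset (F : ℕ → Finset σ) (i : ℕ) : restriction F i ⊆ F i :=
  filter_subset _ _

theorem restCard_eq_card_restriction {n : ℕ} (F : ℕ → Finset (Fin n)) (i : ℕ) :
    restCard F i = #(restriction F i) :=
  rfl

theorem restriction_subset_of_forall_not_subset {G : Finset σ} {i : ℕ} (hG : G ⊆ F i)
    (hmin : ∀ j < i, ¬ G ⊆ F j) : restriction F i ⊆ G := by
  intro v hv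
  obtain ⟨hvF, j, hj, herase⟩ := mem_filter.1 hv
  by_contra hvG
  exact hmin j hj ((subset_erase.2 ⟨hG, hvG⟩).trans herase)

theorem exists_restriction_subset_subset [Finite σ]
    (hfacets : ∀ G : Finset σ, (G ∈ Δ ∧ ∀ G' ∈ Δ, G ⊆ G' → G = G') ↔ ∃ i < m, G = F i)
    {G : Finset σ} (hG : G ∈ Δ) : ∃ i < m, restriction F i ⊆ G ∧ G ⊆ F i := by
  classical
  have hex := exists_lt_subset_of_mem hfacets hG
  obtain ⟨hlt, hsub⟩ := Nat.find_spec hex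
  exact ⟨_, hlt, restriction_subset_of_forall_not_subset hsub
    fun j hj hGj => Nat.find_min hex hj ⟨hj.trans hlt, hGj⟩, hsub⟩

theorem not_subset_of_restriction_subset
    (hshell : ∀ i, 0 < i → i < m → ∃ R : Finset σ, R ⊆ F i ∧ R.Nonempty ∧
      ∀ S : Finset σ, ((S ⊆ F i ∧ ∃ j < i, S ⊆ F j) ↔ ∃ v ∈ R, S ⊆ F i \ {v}))
    {G : Finset σ} {i j : ℕ} (hij : i < j) (hj : j < m) (hRG : restriction F j ⊆ G)
    (hGF : G ⊆ F j) : ¬ G ⊆ F i := by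
  intro hGi
  obtain ⟨R, hRF, -, hR⟩ := hshell j (Nat.zero_lt_of_lt hij) hj
  obtain ⟨v, hvR, hGv⟩ := (hR G).1 ⟨hGF, i, hij, hGi⟩
  have hv : v ∈ restriction F j := by
    refine mem_filter.2 ⟨hRF hvR, ((hR _).2 ⟨v, hvR, ?_⟩).2⟩
    rw [sdiff_singleton_eq_erase]
  simpa using hGv (hRG hv)

theorem card_filter_mem_eq_sum_card_filter_interval [Finite σ]
    (hdown : ∀ F F' : Finset σ, F' ∈ Δ → F ⊆ F' → F ∈ Δ)
    (hfacets : ∀ G : Finset σ, (G ∈ Δ ∧ ∀ G' ∈ Δ, G ⊆ G' → G = G') ↔ ∃ i < m, G = F i)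
    (hshell : ∀ i, 0 < i → i < m → ∃ R : Finset σ, R ⊆ F i ∧ R.Nonempty ∧
      ∀ S : Finset σ, ((S ⊆ F i ∧ ∃ j < i, S ⊆ F j) ↔ ∃ v ∈ R, S ⊆ F i \ {v}))
    {β : Type*} (s : Finset β) (g : β → Finset σ) [DecidablePred (g · ∈ Δ)] :
    #{b ∈ s | g b ∈ Δ} = ∑ i ∈ range m, #{b ∈ s | restriction F i ⊆ g b ∧ g b ⊆ F i} := by
  classical
  rw [← card_biUnion]
  · congr 1
    ext b
    simp only [mem_filter, mem_biUnion, mem_range]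
    constructor
    · rintro ⟨hb, hface⟩
      obtain ⟨i, hi, hR, hF⟩ := exists_restriction_subset_subset hfacets hface
      exact ⟨i, hi, hb, hR, hF⟩
    · rintro ⟨i, hi, hb, -, hF⟩
      exact ⟨hb, hdown _ _ ((hfacets (F i)).2 ⟨i, hi, rfl⟩).1 hF⟩
  · intro i hi j hj hij
    simp only [Function.onFun, disjoint_left, mem_filter]
    rintro b ⟨-, hRi, hFi⟩ ⟨-, hRj, hFj⟩
    rcases lt_or_gt_of_ne hij with h | h
    · exact not_subset_of_restriction_subset hshell h (mem_range.1 hj) hRj hFj hFi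
    · exact not_subset_of_restriction_subset hshell h (mem_range.1 hi) hRi hFi hFj

end Shelling

section Counting

variable {σ : Type*} [DecidableEq σ]

theorem card_filter_interval_add_card_eq [Fintype σ] {R F : Finset σ} (hRF : R ⊆ F) (k : ℕ) :
    #{α ∈ finsuppAntidiag univ (k + #R) | R ⊆ α.support ∧ α.support ⊆ F} =
      #(finsuppAntidiag F k) := by
  refine card_nbij' (· - Finsupp.indicatorOne R) (· + Finsupp.indicatorOne R) ?_ ?_ ?_ ?_ <;>
    simp only [Set.MapsTo, Set.LeftInvOn, coe_filter, Set.mem_ofPred_eq, mem_coe,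
      mem_finsuppAntidiag_iff_degree, subset_univ, and_true, ← Finsupp.indicatorOne_le_iff]
  · rintro α ⟨hdeg, hR, hF⟩
    refine ⟨?_, Finsupp.support_tsub.trans hF⟩
    have := congrArg Finsupp.degree (tsub_add_cancel_of_le hR)
    simp only [map_add, Finsupp.degree_indicatorOne] at this
    omega
  · rintro β ⟨hdeg, hF⟩
    refine ⟨by simp [hdeg], le_add_self, ?_⟩
    rw [Finsupp.support_add_eq_union, Finsupp.support_indicatorOne]
    exact union_subset hF hRF
  · rintro α ⟨-, hR, -⟩
    exact tsub_add_cancel_of_le hR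
  · intro β _
    exact add_tsub_cancel_right β _

theorem filter_interval_eq_empty [Fintype σ] {R F : Finset σ} {k : ℕ} (hk : k < #R) :
    {α ∈ finsuppAntidiag (univ : Finset σ) k | R ⊆ α.support ∧ α.support ⊆ F} = ∅ := by
  refine filter_false_of_mem fun α hα ⟨hR, _⟩ => ?_
  have := Finsupp.degree_mono (Finsupp.indicatorOne_le_iff.2 hR)
  rw [Finsupp.degree_indicatorOne, (mem_finsuppAntidiag_iff_degree.1 hα).1] at this
  omega

theorem PowerSeries.coeff_mk_one_pow_card {S : Type*} [CommSemiring S] (F : Finset σ) (k : ℕ) :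
    coeff k (mk 1 ^ #F : PowerSeries S) = #(finsuppAntidiag F k) := by
  rw [← prod_const, coeff_prod]
  simp

theorem PowerSeries.coeff_X_pow_mul_mk_one_pow [Fintype σ] {S : Type*} [CommSemiring S]
    {R F : Finset σ} (hRF : R ⊆ F) (k : ℕ) :
    coeff k (X ^ #R * mk 1 ^ #F : PowerSeries S) =
      #{α ∈ finsuppAntidiag univ k | R ⊆ α.support ∧ α.support ⊆ F} := by
  rw [coeff_X_pow_mul', coeff_mk_one_pow_card]
  split_ifs with hk
  · rw [← card_filter_interval_add_card_eq hRF, Nat.sub_add_cancel hk]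
  · rw [filter_interval_eq_empty (not_le.1 hk), card_empty, Nat.cast_zero]

end Counting

theorem mcMullen_walkup_general (K : Type) [Field K] (n d m : ℕ)
    (Δ : Set (Finset (Fin n)))
    (hdown : ∀ F F' : Finset (Fin n), F' ∈ Δ → F ⊆ F' → F ∈ Δ)
    (F : ℕ → Finset (Fin n))
    (hfacets : ∀ G : Finset (Fin n),
      (G ∈ Δ ∧ ∀ G' ∈ Δ, G ⊆ G' → G = G') ↔ ∃ i < m, G = F i)
    (hpure : ∀ i < m, (F i).card = d)
    (hshell : ∀ i, 0 < i → i < m → ∃ R : Finset (Fin n), R ⊆ F i ∧ R.Nonempty ∧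
      ∀ S : Finset (Fin n), ((S ⊆ F i ∧ ∃ j < i, S ⊆ F j) ↔ ∃ v ∈ R, S ⊆ F i \ {v})) :
    hilbSeries K n (srIdeal K n Δ) * (1 - PowerSeries.X) ^ d =
      ∑ i ∈ Finset.range m, PowerSeries.X ^ restCard F i := by
  classical
  have hseries : hilbSeries K n (srIdeal K n Δ) =
      ∑ i ∈ range m, PowerSeries.X ^ restCard F i * PowerSeries.mk 1 ^ d := by
    ext k
    rw [hilbSeries, PowerSeries.coeff_mk,
      hilbFn_eq_card_of_mem_iff (fun _ => mem_srIdeal_iff hdown) k,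
      card_filter_mem_eq_sum_card_filter_interval hdown hfacets hshell, map_sum, Nat.cast_sum]
    refine sum_congr rfl fun i hi => ?_
    rw [← hpure i (mem_range.1 hi), restCard_eq_card_restriction,
      PowerSeries.coeff_X_pow_mul_mk_one_pow (restriction_subset F i)]
  rw [hseries, sum_mul]
  refine sum_congr rfl fun i _ => ?_
  rw [mul_assoc, ← mul_pow, PowerSeries.mk_one_mul_one_sub_eq_one, one_pow, mul_one]

/-- McMullen–Walkup: if `Δ` is a pure shellable simplicial complex on `[n]` with shelling
`F 0, …, F (m-1)` (facets of cardinality `d`), and `c i` is the number of minimal generators of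
`⟨F 0, …, F (i-1)⟩ ∩ ⟨F i⟩` (with `c 0 = 0`), then the `h`-polynomial of `K[Δ]` — the numerator
of the Hilbert–Poincaré series `HP(t) = h(t)/(1-t)^d` — equals `Σ_{i=1}^m t^{c i}`. -/
theorem mcMullen_walkup (K : Type) [Field K] (n d m : ℕ)
    (Δ : Set (Finset (Fin n)))
    (hdown : ∀ F F' : Finset (Fin n), F' ∈ Δ → F ⊆ F' → F ∈ Δ)
    (hvert : ∀ i : Fin n, ({i} : Finset (Fin n)) ∈ Δ)
    (F : ℕ → Finset (Fin n))
    (hinj : ∀ i < m, ∀ j < m, F i = F j → i = j)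
    (hfacets : ∀ G : Finset (Fin n),
      (G ∈ Δ ∧ ∀ G' ∈ Δ, G ⊆ G' → G = G') ↔ ∃ i < m, G = F i)
    (hpure : ∀ i < m, (F i).card = d)
    (hshell : ∀ i, 0 < i → i < m → ∃ R : Finset (Fin n), R ⊆ F i ∧ R.Nonempty ∧
      ∀ S : Finset (Fin n), ((S ⊆ F i ∧ ∃ j < i, S ⊆ F j) ↔ ∃ v ∈ R, S ⊆ F i \ {v})) :
    hilbSeries K n (srIdeal K n Δ) * (1 - PowerSeries.X) ^ d =
      ∑ i ∈ Finset.range m, PowerSeries.X ^ restCard F i :=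
  mcMullen_walkup_general K n d m Δ hdown F hfacets hpure hshell
end
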